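/- arXiv:2412.04615 — 4 statements merged into one kernel-verified Lean document; each statement's English description precedes it below -/
import Mathlib

section
/- Let (a_n) and (b_n) be sequences of nonnegative reals with a_n = O(n^{-d}) and b_n = O(n^{-c}) for constants c ≥ d > 1. Then the convolution sequence c_n = Σ_{i+j=n} a_i b_j satisfies c_n = O(n^{-d}). -/
open Finset Real

private lemma half_rpow_bound {n : ℕ} {x e : ℝ} (hn : 1 ≤ n) (he : 0 < e)
    (hx : (n : ℝ) / 2 ≤ x) : x ^ (-e) ≤ 2 ^ e * (n : ℝ) ^ (-e) := by
  have hn' : (1:ℝ) ≤ (n:ℝ) := by exact_mod_cast hn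
  have h2 : (0:ℝ) < (n:ℝ)/2 := by linarith
  calc x ^ (-e) ≤ ((n:ℝ)/2) ^ (-e) :=
        Real.rpow_le_rpow_of_nonpos h2 hx (by linarith)
    _ = 2 ^ e * (n:ℝ) ^ (-e) := by
        rw [div_eq_mul_inv, Real.mul_rpow (by positivity) (by positivity),
          Real.inv_rpow (by norm_num), ← Real.rpow_neg (by norm_num), neg_neg]
        ring

private lemma partial_sum_bound (f : ℕ → ℝ) (hf0 : ∀ n, 0 ≤ f n) {C e : ℝ}
    (he : 1 < e) (hC : 0 ≤ C)
    (hf : ∀ n : ℕ, 1 ≤ n → f n ≤ C * (n : ℝ) ^ (-e)) (n : ℕ) :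
    ∑ i ∈ Finset.range (n + 1), f i ≤ f 0 + C * ∑' i : ℕ, ((i:ℝ)+1) ^ (-e) := by
  have hsum : Summable fun i : ℕ => ((i:ℝ)+1) ^ (-e) := by
    have h0 : Summable fun i : ℕ => (i:ℝ) ^ (-e) :=
      Real.summable_nat_rpow.2 (by linarith)
    have := (summable_nat_add_iff 1).2 h0
    refine this.congr fun i => ?_
    push_cast
    ring_nf
  rw [Finset.sum_range_succ']
  have h1 : ∑ i ∈ Finset.range n, f (i + 1)
      ≤ ∑ i ∈ Finset.range n, C * ((i:ℝ)+1) ^ (-e) := by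
    refine Finset.sum_le_sum fun i _ => ?_
    have := hf (i+1) (by omega)
    push_cast at this ⊢
    linarith
  have h2 : ∑ i ∈ Finset.range n, C * ((i:ℝ)+1) ^ (-e)
      ≤ C * ∑' i : ℕ, ((i:ℝ)+1) ^ (-e) := by
    rw [← Finset.mul_sum]
    refine mul_le_mul_of_nonneg_left ?_ hC
    exact Summable.sum_le_tsum (Finset.range n) (fun i _ => by positivity) hsum
  linarith

/-- Convolution of `O(n^{-d})` and `O(n^{-c})` sequences (c ≥ d > 1) is `O(n^{-d})`. -/
theorem convolution_bigO
    (a b : ℕ → ℝ) (c d : ℝ) (hd : 1 < d) (hcd : d ≤ c)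
    (ha0 : ∀ n, 0 ≤ a n) (hb0 : ∀ n, 0 ≤ b n)
    (ha : ∃ Ca : ℝ, 1 ≤ Ca ∧ ∀ n : ℕ, 1 ≤ n → a n ≤ Ca * (n : ℝ) ^ (-d))
    (hb : ∃ Cb : ℝ, 1 ≤ Cb ∧ ∀ n : ℕ, 1 ≤ n → b n ≤ Cb * (n : ℝ) ^ (-c)) :
    ∃ C : ℝ, 1 ≤ C ∧ ∀ n : ℕ, 1 ≤ n →
      (∑ i ∈ Finset.range (n + 1), a i * b (n - i)) ≤ C * (n : ℝ) ^ (-d) := by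
  obtain ⟨Ca, hCa1, hCa⟩ := ha
  obtain ⟨Cb, hCb1, hCb⟩ := hb
  have hd0 : (0:ℝ) < d := by linarith
  have hc1 : (1:ℝ) < c := lt_of_lt_of_le hd hcd
  have hc0 : (0:ℝ) < c := by linarith
  have hCa0 : (0:ℝ) ≤ Ca := by linarith
  have hCb0 : (0:ℝ) ≤ Cb := by linarith
  set Sa : ℝ := ∑' i : ℕ, ((i:ℝ)+1) ^ (-d) with hSa
  set Sb : ℝ := ∑' i : ℕ, ((i:ℝ)+1) ^ (-c) with hSb
  have hSa0 : 0 ≤ Sa := tsum_nonneg fun i => by positivity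
  have hSb0 : 0 ≤ Sb := tsum_nonneg fun i => by positivity
  set A : ℝ := a 0 + Ca * Sa with hA
  set B : ℝ := b 0 + Cb * Sb with hB
  have hA0 : 0 ≤ A := by have := ha0 0; positivity
  have hB0 : 0 ≤ B := by have := hb0 0; positivity
  refine ⟨max 1 (Cb * 2 ^ c * A + Ca * 2 ^ d * B), le_max_left _ _, ?_⟩
  intro n hn
  have hn' : (1:ℝ) ≤ (n:ℝ) := by exact_mod_cast hn
  have hnd : (0:ℝ) ≤ (n:ℝ) ^ (-d) := by positivity
  set K1 : ℝ := Cb * 2 ^ c * (n:ℝ) ^ (-d) with hK1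
  set K2 : ℝ := Ca * 2 ^ d * (n:ℝ) ^ (-d) with hK2
  have hK10 : 0 ≤ K1 := by positivity
  have hK20 : 0 ≤ K2 := by positivity
  have key : ∀ i ∈ Finset.range (n+1), a i * b (n - i) ≤ K1 * a i + K2 * b (n - i) := by
    intro i hi
    rw [Finset.mem_range, Nat.lt_succ_iff] at hi
    by_cases hcase : i ≤ n / 2
    · -- b (n - i) ≤ K1
      have h1 : 1 ≤ n - i := by omega
      have hnat : n ≤ 2 * (n - i) := by omega
      have h2 : (n:ℝ)/2 ≤ ((n - i : ℕ):ℝ) := by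
        have : (n:ℝ) ≤ 2 * ((n - i : ℕ):ℝ) := by exact_mod_cast hnat
        linarith
      have hbn : b (n - i) ≤ K1 := by
        calc b (n - i) ≤ Cb * ((n - i : ℕ):ℝ) ^ (-c) := hCb _ h1
          _ ≤ Cb * (2 ^ c * (n:ℝ) ^ (-c)) :=
              mul_le_mul_of_nonneg_left (half_rpow_bound hn hc0 h2) hCb0
          _ ≤ Cb * (2 ^ c * (n:ℝ) ^ (-d)) := by
              have : (n:ℝ) ^ (-c) ≤ (n:ℝ) ^ (-d) :=
                Real.rpow_le_rpow_of_exponent_le hn' (by linarith)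
              have h2c : (0:ℝ) ≤ (2:ℝ) ^ c := by positivity
              exact mul_le_mul_of_nonneg_left
                (mul_le_mul_of_nonneg_left this h2c) hCb0
          _ = K1 := by rw [hK1]; ring
      have := mul_le_mul_of_nonneg_left hbn (ha0 i)
      have hrest : 0 ≤ K2 * b (n - i) := mul_nonneg hK20 (hb0 _)
      nlinarith
    · -- a i ≤ K2
      have h1 : 1 ≤ i := by omega
      have hnat : n ≤ 2 * i := by omega
      have h2 : (n:ℝ)/2 ≤ (i:ℝ) := by
        have : (n:ℝ) ≤ 2 * (i:ℝ) := by exact_mod_cast hnat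
        linarith
      have han : a i ≤ K2 := by
        calc a i ≤ Ca * (i:ℝ) ^ (-d) := hCa _ h1
          _ ≤ Ca * (2 ^ d * (n:ℝ) ^ (-d)) :=
              mul_le_mul_of_nonneg_left (half_rpow_bound hn hd0 h2) hCa0
          _ = K2 := by rw [hK2]; ring
      have := mul_le_mul_of_nonneg_right han (hb0 (n - i))
      have hrest : 0 ≤ K1 * a i := mul_nonneg hK10 (ha0 _)
      nlinarith
  calc ∑ i ∈ Finset.range (n+1), a i * b (n - i)
      ≤ ∑ i ∈ Finset.range (n+1), (K1 * a i + K2 * b (n - i)) := Finset.sum_le_sum key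
    _ = K1 * ∑ i ∈ Finset.range (n+1), a i + K2 * ∑ i ∈ Finset.range (n+1), b (n - i) := by
        rw [Finset.sum_add_distrib, Finset.mul_sum, Finset.mul_sum]
    _ = K1 * ∑ i ∈ Finset.range (n+1), a i + K2 * ∑ i ∈ Finset.range (n+1), b i := by
        congr 1
        congr 1
        rw [← Finset.sum_range_reflect]
        refine Finset.sum_congr rfl fun i hi => ?_
        rw [Finset.mem_range, Nat.lt_succ_iff] at hi
        congr 1
        omega
    _ ≤ K1 * A + K2 * B := by
        have h1 := partial_sum_bound a ha0 hd hCa0 hCa n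
        have h2 := partial_sum_bound b hb0 hc1 hCb0 hCb n
        have := mul_le_mul_of_nonneg_left h1 hK10
        have := mul_le_mul_of_nonneg_left h2 hK20
        rw [hA, hB]
        linarith
    _ = (Cb * 2 ^ c * A + Ca * 2 ^ d * B) * (n:ℝ) ^ (-d) := by rw [hK1, hK2]; ring
    _ ≤ max 1 (Cb * 2 ^ c * A + Ca * 2 ^ d * B) * (n:ℝ) ^ (-d) :=
        mul_le_mul_of_nonneg_right (le_max_right _ _) hnd
end

section
/- Let f : S¹ → ℂ be a function on the unit circle which is a times continuously differentiable with β-Hölder a-th derivative, where a ∈ ℕ and β ∈ (0,1). Then its n-th Fourier coefficient c_n = (1/2π) ∫₀^{2π} f(e^{it}) e^{-int} dt satisfies c_n = O(n^{-a-β}) as n → ∞. -/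
/-!
Pull `f` back to the `2π`-periodic function `g t = f (exp (t * I))`. Translating by `π / n`
flips the sign of `exp (-n t I)`, so `2 c_n(g)` is the `n`-th coefficient of
`g t - g (t + π / n)`; for `β`-Hölder `g` this gives `|c_n(g)| ≤ C (π / n) ^ β / 2`.
On the circle, `g' t = I * exp (t * I) * f' (exp (t * I))`, and integration by parts turns this
into `n c_n(f) = c_{n-1}(f')`: each derivative gains one power of `n`, so a downward induction
from the Hölder `a`-th derivative gives the decay `n ^ (-a - β)`.
-/

open MeasureTheory
open Complex Metric
open scoped Real

lemma fourierCoeffOn_two_pi_eq (h : ℝ → ℂ) (n : ℤ) :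
    fourierCoeffOn Real.two_pi_pos h n =
      1 / (2 * (π : ℂ)) * ∫ t in (0 : ℝ)..2 * π, h t * exp (-n * t * I) := by
  rw [fourierCoeffOn_eq_integral, sub_zero, Complex.real_smul]
  push_cast
  congr 1
  refine intervalIntegral.integral_congr fun t _ => ?_
  rw [fourier_coe_apply, smul_eq_mul, mul_comm]
  congr 2
  field_simp
  push_cast
  ring

lemma exp_neg_int_mul_periodic (n : ℤ) :
    Function.Periodic (fun t : ℝ => exp (-n * t * I)) (2 * π) := fun t => by
  have : -(n : ℂ) * ↑(t + 2 * π) * I = -n * t * I + ((-n : ℤ) : ℂ) * (2 * π * I) := by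
    push_cast; ring
  simp only [this, Complex.exp_add, exp_int_mul_two_pi_mul_I, mul_one]

lemma exp_neg_int_mul_add_pi_div (n : ℤ) (hn : n ≠ 0) (t : ℝ) :
    exp (-n * ↑(t + π / n) * I) = -exp (-n * t * I) := by
  have : -(n : ℂ) * ↑(t + π / n) * I = -n * t * I + -(π * I) := by
    push_cast; field_simp; ring
  rw [this, Complex.exp_add, Complex.exp_neg, exp_pi_mul_I]
  ring

lemma norm_fourierCoeffOn_two_pi_le_of_norm_sub_le {h : ℝ → ℂ} (hc : Continuous h)
    (hp : Function.Periodic h (2 * π)) {n : ℤ} (hn : n ≠ 0) {ε : ℝ}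
    (hε : ∀ t, ‖h t - h (t + π / n)‖ ≤ ε) :
    ‖fourierCoeffOn Real.two_pi_pos h n‖ ≤ ε / 2 := by
  set e : ℝ → ℂ := fun t => exp (-n * t * I)
  have he : Continuous e := by fun_prop
  have hG : Function.Periodic (fun t => h t * e t) (2 * π) :=
    hp.mul (exp_neg_int_mul_periodic n)
  have hshift : ∫ t in (0 : ℝ)..2 * π, h (t + π / n) * e t =
      -∫ t in (0 : ℝ)..2 * π, h t * e t := by
    calc ∫ t in (0 : ℝ)..2 * π, h (t + π / n) * e t
        = -∫ t in (0 : ℝ)..2 * π, h (t + π / n) * e (t + π / n) := by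
          rw [← intervalIntegral.integral_neg]
          simp only [e, exp_neg_int_mul_add_pi_div n hn, mul_neg, neg_neg]
      _ = -∫ t in π / n..π / n + 2 * π, h t * e t := by
          rw [intervalIntegral.integral_comp_add_right (fun t => h t * e t), zero_add, add_comm]
      _ = -∫ t in (0 : ℝ)..2 * π, h t * e t := by
          rw [hG.intervalIntegral_add_eq (π / n) 0, zero_add]
  have hdiff : 2 * ∫ t in (0 : ℝ)..2 * π, h t * e t =
      ∫ t in (0 : ℝ)..2 * π, (h t - h (t + π / n)) * e t := by
    simp only [sub_mul]
    rw [intervalIntegral.integral_sub (f := fun t => h t * e t)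
      (g := fun t => h (t + π / n) * e t) ((hc.mul he).intervalIntegrable _ _)
      (((hc.comp (continuous_add_const _)).mul he).intervalIntegrable _ _), hshift]
    ring
  have hbound : ‖∫ t in (0 : ℝ)..2 * π, (h t - h (t + π / n)) * e t‖ ≤ ε * (2 * π) := by
    have := intervalIntegral.norm_integral_le_of_norm_le_const (a := 0) (b := 2 * π)
      (f := fun t => (h t - h (t + π / n)) * e t) (C := ε)
      (fun t _ => by simpa [e, Complex.norm_exp] using hε t)
    simpa [abs_of_pos Real.two_pi_pos] using this
  have h2π : ‖1 / (2 * (π : ℂ))‖ = 1 / (2 * π) := by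
    simp [abs_of_pos Real.pi_pos]
  rw [fourierCoeffOn_two_pi_eq, norm_mul, h2π]
  change _ * ‖∫ t in (0 : ℝ)..2 * π, h t * e t‖ ≤ _
  have hA : ‖∫ t in (0 : ℝ)..2 * π, h t * e t‖ ≤ ε * π := by
    rw [← hdiff, norm_mul, Complex.norm_two] at hbound
    linarith
  calc 1 / (2 * π) * ‖∫ t in (0 : ℝ)..2 * π, h t * e t‖ ≤ 1 / (2 * π) * (ε * π) := by gcongr
    _ = ε / 2 := by field_simp

lemma fourierCoeffOn_two_pi_exp_mul (h : ℝ → ℂ) (n : ℤ) :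
    fourierCoeffOn Real.two_pi_pos (fun t => exp (t * I) * h t) n =
      fourierCoeffOn Real.two_pi_pos h (n - 1) := by
  simp only [fourierCoeffOn_two_pi_eq]
  congr 1
  refine intervalIntegral.integral_congr fun t _ => ?_
  rw [mul_comm (exp _), mul_assoc, ← Complex.exp_add]
  push_cast
  ring_nf

lemma fourierCoeffOn_two_pi_of_hasDerivAt {h h' : ℝ → ℂ} (hp : Function.Periodic h (2 * π))
    (hd : ∀ t, HasDerivAt h (h' t) t) (hi : IntervalIntegrable h' volume 0 (2 * π)) {n : ℤ}
    (hn : n ≠ 0) :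
    fourierCoeffOn Real.two_pi_pos h' n = n * I * fourierCoeffOn Real.two_pi_pos h n := by
  have h2π : h (2 * π) = h 0 := by simpa using hp 0
  rw [fourierCoeffOn_of_hasDerivAt Real.two_pi_pos hn (fun t _ => hd t) hi, h2π, sub_self,
    mul_zero, zero_sub]
  field_simp
  push_cast
  ring_nf

lemma norm_exp_mul_I_sub_exp_mul_I_le (s t : ℝ) : ‖exp (↑s * I) - exp (↑t * I)‖ ≤ |s - t| := by
  simpa [circleMap, dist_eq_norm, Real.dist_eq] using (lipschitzWith_circleMap 0 1).dist_le_mul s t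

lemma exp_mul_I_mem_sphere (t : ℝ) : exp (↑t * I) ∈ sphere (0 : ℂ) 1 := by
  simp [Complex.norm_exp_ofReal_mul_I]

lemma hasDerivAt_comp_exp_mul_I {f : ℂ → ℂ} {f' : ℂ} {t : ℝ}
    (hf : HasDerivWithinAt f f' (sphere 0 1) (exp (↑t * I))) :
    HasDerivAt (fun s : ℝ => f (exp (s * I))) (I * (exp (↑t * I) * f')) t := by
  have hE : HasDerivAt (fun s : ℝ => exp (s * I)) (exp (↑t * I) * I) t := by
    simpa using ((hasDerivAt_id t).ofReal_comp.mul_const I).cexp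
  exact (hf.scomp_hasDerivAt t hE fun s => exp_mul_I_mem_sphere s).congr_deriv
    (by rw [smul_eq_mul]; ring)

noncomputable def circleFourierCoeff (f : ℂ → ℂ) (n : ℤ) : ℂ :=
  fourierCoeffOn Real.two_pi_pos (fun t : ℝ => f (exp (t * I))) n

lemma continuous_comp_exp_mul_I {f : ℂ → ℂ} (hf : ContinuousOn f (sphere 0 1)) :
    Continuous fun t : ℝ => f (exp (t * I)) :=
  hf.comp_continuous (by fun_prop) exp_mul_I_mem_sphere

lemma periodic_comp_exp_mul_I (f : ℂ → ℂ) :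
    Function.Periodic (fun t : ℝ => f (exp (t * I))) (2 * π) :=
  fun t => by push_cast; exact congrArg f (exp_mul_I_periodic t)

lemma norm_circleFourierCoeff_le_of_holder {f : ℂ → ℂ} (hf : ContinuousOn f (sphere 0 1))
    {β C : ℝ} (hβ : 0 ≤ β) (hC : 0 ≤ C)
    (hH : ∀ z₁ ∈ sphere (0 : ℂ) 1, ∀ z₂ ∈ sphere (0 : ℂ) 1, ‖f z₁ - f z₂‖ ≤ C * ‖z₁ - z₂‖ ^ β)
    {n : ℤ} (hn : n ≠ 0) :
    ‖circleFourierCoeff f n‖ ≤ C * (π / |n|) ^ β / 2 := by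
  refine norm_fourierCoeffOn_two_pi_le_of_norm_sub_le (continuous_comp_exp_mul_I hf)
    (periodic_comp_exp_mul_I f) hn fun t => ?_
  calc ‖f (exp (t * I)) - f (exp (↑(t + π / n) * I))‖
      ≤ C * ‖exp (t * I) - exp (↑(t + π / n) * I)‖ ^ β :=
        hH _ (exp_mul_I_mem_sphere _) _ (exp_mul_I_mem_sphere _)
    _ ≤ C * (π / |n|) ^ β := by
        gcongr
        refine (norm_exp_mul_I_sub_exp_mul_I_le _ _).trans_eq ?_
        rw [sub_add_cancel_left, abs_neg, abs_div, abs_of_pos Real.pi_pos, Int.cast_abs]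

lemma int_mul_circleFourierCoeff {f f₁ : ℂ → ℂ}
    (hf : ∀ z ∈ sphere (0 : ℂ) 1, HasDerivWithinAt f (f₁ z) (sphere 0 1) z)
    (hf₁ : ContinuousOn f₁ (sphere 0 1)) {n : ℤ} (hn : n ≠ 0) :
    n * circleFourierCoeff f n = circleFourierCoeff f₁ (n - 1) := by
  have hd : ∀ t : ℝ, HasDerivAt (fun s : ℝ => f (exp (s * I)))
      (I * (exp (t * I) * f₁ (exp (t * I)))) t :=
    fun t => hasDerivAt_comp_exp_mul_I (hf _ (exp_mul_I_mem_sphere t))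
  have hi : IntervalIntegrable (fun t : ℝ => I * (exp (t * I) * f₁ (exp (t * I))))
      volume 0 (2 * π) :=
    (continuous_const.mul ((by fun_prop : Continuous fun t : ℝ => exp (t * I)).mul
      (continuous_comp_exp_mul_I hf₁))).intervalIntegrable _ _
  have := fourierCoeffOn_two_pi_of_hasDerivAt (periodic_comp_exp_mul_I f) hd hi hn
  rw [fourierCoeffOn.const_mul, fourierCoeffOn_two_pi_exp_mul] at this
  apply mul_left_cancel₀ I_ne_zero
  unfold circleFourierCoeff
  linear_combination -this

lemma exists_bound_of_succ_mul_eq {u v : ℕ → ℝ} {s C : ℝ} (hs : 0 ≤ s) (hC : 0 < C)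
    (huv : ∀ n : ℕ, (n + 1) * u (n + 1) = v n) (hv : ∀ n : ℕ, 1 ≤ n → v n ≤ C * n ^ (-s)) :
    ∃ K > 0, ∀ n : ℕ, 1 ≤ n → u n ≤ K * n ^ (-(s + 1)) := by
  refine ⟨max (v 0) (2 ^ s * C), lt_max_of_lt_right (by positivity), fun n hn => ?_⟩
  obtain ⟨m, rfl⟩ := Nat.exists_eq_add_of_le' hn
  have hm : (0 : ℝ) < m + 1 := by positivity
  have hvm : v m ≤ max (v 0) (2 ^ s * C) * ((m : ℝ) + 1) ^ (-s) := by
    rcases m.eq_zero_or_pos with rfl | hm0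
    · simp
    have hm1 : (1 : ℝ) ≤ m := by exact_mod_cast hm0
    calc v m ≤ C * (m : ℝ) ^ (-s) := hv m hm0
      _ ≤ C * (((m : ℝ) + 1) / 2) ^ (-s) := mul_le_mul_of_nonneg_left
          (Real.rpow_le_rpow_of_nonpos (by positivity) (by linarith) (by linarith)) hC.le
      _ = 2 ^ s * C * ((m : ℝ) + 1) ^ (-s) := by
          rw [Real.div_rpow hm.le zero_le_two, Real.rpow_neg zero_le_two]
          field_simp
      _ ≤ max (v 0) (2 ^ s * C) * ((m : ℝ) + 1) ^ (-s) := by gcongr; exact le_max_right _ _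
  have hu : u (m + 1) = v m / (m + 1) := by
    rw [← huv m]; field_simp
  push_cast
  rw [hu, neg_add, Real.rpow_add hm, Real.rpow_neg_one, ← mul_assoc, ← div_eq_mul_inv]
  gcongr

def FourierCoeffDecay (f : ℂ → ℂ) (s : ℝ) : Prop :=
  ∃ C > 0, ∀ n : ℕ, 1 ≤ n → ‖circleFourierCoeff f n‖ ≤ C * (n : ℝ) ^ (-s)

lemma FourierCoeffDecay.of_holder {f : ℂ → ℂ} (hf : ContinuousOn f (sphere 0 1)) {β : ℝ}
    (hβ : 0 ≤ β)
    (hH : ∃ C > 0, ∀ z₁ ∈ sphere (0 : ℂ) 1, ∀ z₂ ∈ sphere (0 : ℂ) 1,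
      ‖f z₁ - f z₂‖ ≤ C * ‖z₁ - z₂‖ ^ β) :
    FourierCoeffDecay f β := by
  obtain ⟨C, hC, hH⟩ := hH
  refine ⟨C * π ^ β / 2, by positivity, fun n hn => ?_⟩
  have hn0 : (0 : ℝ) < n := by exact_mod_cast hn
  refine (norm_circleFourierCoeff_le_of_holder hf hβ hC.le hH (by positivity)).trans_eq ?_
  rw [Nat.abs_cast, Int.cast_natCast, Real.div_rpow Real.pi_pos.le hn0.le,
    Real.rpow_neg hn0.le]
  ring

lemma FourierCoeffDecay.of_hasDerivWithinAt {f f₁ : ℂ → ℂ}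
    (hf : ∀ z ∈ sphere (0 : ℂ) 1, HasDerivWithinAt f (f₁ z) (sphere 0 1) z)
    (hf₁ : ContinuousOn f₁ (sphere 0 1)) {s : ℝ} (hs : 0 ≤ s) (h₁ : FourierCoeffDecay f₁ s) :
    FourierCoeffDecay f (s + 1) := by
  obtain ⟨C, hC, hC₁⟩ := h₁
  refine exists_bound_of_succ_mul_eq hs hC (fun n => ?_) hC₁
  have := congrArg norm (int_mul_circleFourierCoeff hf hf₁ (n := (n + 1 : ℕ)) (by omega))
  rw [norm_mul, Int.cast_natCast, Complex.norm_natCast] at this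
  push_cast at this ⊢
  rwa [add_sub_cancel_right] at this

/-- Fourier coefficients of a `C^{a+β}` function on the unit circle decay like `n^{-a-β}`. -/
theorem fourier_coeff_decay_of_holder
    (a : ℕ) (β : ℝ) (hβ : 0 < β ∧ β < 1) (F : ℕ → ℂ → ℂ)
    (hcont : ∀ i ≤ a, ContinuousOn (F i) (Metric.sphere (0 : ℂ) 1))
    (hderiv : ∀ i < a, ∀ z ∈ Metric.sphere (0 : ℂ) 1,
      HasDerivWithinAt (F i) (F (i + 1) z) (Metric.sphere (0 : ℂ) 1) z)
    (hHolder : ∃ C > 0, ∀ z₁ ∈ Metric.sphere (0 : ℂ) 1, ∀ z₂ ∈ Metric.sphere (0 : ℂ) 1,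
      ‖F a z₁ - F a z₂‖ ≤ C * ‖z₁ - z₂‖ ^ β) :
    ∃ C > 0, ∀ n : ℕ, 1 ≤ n →
      ‖(1 / (2 * (Real.pi : ℂ))) *
          ∫ t in (0 : ℝ)..(2 * Real.pi),
            F 0 (Complex.exp (t * Complex.I)) * Complex.exp (-(n : ℂ) * t * Complex.I)‖
        ≤ C * (n : ℝ) ^ (-(a : ℝ) - β) := by
  have hdecay : ∀ j ≤ a, FourierCoeffDecay (F (a - j)) (j + β) := by
    intro j
    induction j with
    | zero =>
      intro _
      simpa using FourierCoeffDecay.of_holder (hcont a le_rfl) hβ.1.le hHolder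
    | succ j ih =>
      intro hj
      have hsucc : a - (j + 1) + 1 = a - j := by omega
      have := FourierCoeffDecay.of_hasDerivWithinAt (f := F (a - (j + 1)))
        (hsucc ▸ hderiv (a - (j + 1)) (by omega)) (hcont (a - j) (by omega))
        (add_nonneg j.cast_nonneg hβ.1.le)
        (ih (by omega))
      rwa [Nat.cast_add_one, add_right_comm]
  obtain ⟨C, hC, hbound⟩ := hdecay a le_rfl
  refine ⟨C, hC, fun n hn => ?_⟩
  have := hbound n hn
  rwa [Nat.sub_self, circleFourierCoeff, fourierCoeffOn_two_pi_eq, Int.cast_natCast,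
    neg_add'] at this
end

section
/- Let (r_n)_{n≥1} be nonnegative reals with Σ_{j≥n} r_j ≤ C n^{-k-β} for some k ∈ ℕ, β ∈ (0,1), C > 0. Define g(z) = Σ_{i≥0} P_{i+k}^k r_{i+k} z^i on the closed unit disk, where P_{i+k}^k = (i+k)(i+k-1)⋯(i+1). Then g is β-Hölder on the closed unit disk: there is a constant C' depending only on C, k, β such that |g(z₁) - g(z₂)| ≤ C' |z₁ - z₂|^β for all z₁, z₂ in the closed unit disk. -/
/-!
Write `g z₁ - g z₂ = ∑ cᵢ (z₁ⁱ - z₂ⁱ)` with `‖cᵢ‖ ≤ (i + k)ᵏ r_{i+k}` and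
`‖z₁ⁱ - z₂ⁱ‖ ≤ min 2 (i δ)`, where `δ = ‖z₁ - z₂‖`. Summation by parts against the tails
`T n = ∑_{j ≥ n} r_j ≤ C n^{-k-β}`, followed by comparison of `∑ (n + 1)^{s-1}` with
`∫ x^{s-1}`, gives `∑_{n ≥ N} nᵏ r_n ≲ N^{-β}` and `∑_{n < M} n^{k+1} r_n ≲ M^{1-β}`.
Cutting the series at `N ≈ δ⁻¹` bounds the tail by `2 N^{-β} ≲ δ^β` and the head by
`δ N^{1-β} ≲ δ^β`.
-/

open Finset

theorem sum_Ico_mul_add_mul_eq {R : Type*} [CommRing R] {a r T : ℕ → R}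
    (hr : ∀ n, r n = T n - T (n + 1)) {N M : ℕ} (hNM : N ≤ M) :
    ∑ n ∈ Ico N M, a n * r n + a M * T M
      = a N * T N + ∑ n ∈ Ico N M, (a (n + 1) - a n) * T (n + 1) := by
  induction M, hNM using Nat.le_induction with
  | base => simp
  | succ M hNM ih =>
    rw [sum_Ico_succ_top hNM, sum_Ico_succ_top hNM, hr M]
    linear_combination ih

theorem tsum_nat_add_eq_add_tsum {G : Type*} [AddCommGroup G] [TopologicalSpace G]
    [IsTopologicalAddGroup G] [T2Space G] {r : ℕ → G} (hr : Summable r) (n : ℕ) :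
    ∑' j, r (n + j) = r n + ∑' j, r (n + 1 + j) := by
  have hs : Summable fun j => r (n + j) := by
    simpa only [add_comm] using (summable_nat_add_iff n).mpr hr
  rw [hs.tsum_eq_zero_add]
  congr 2 with j
  rw [add_comm j, add_assoc]

theorem pow_succ_sub_pow_le {x : ℝ} (hx : 0 ≤ x) (p : ℕ) :
    (x + 1) ^ p - x ^ p ≤ p * (x + 1) ^ ((p : ℝ) - 1) := by
  rcases p with _ | p
  · simp
  · have h := abs_pow_sub_pow_le (x + 1) x (p + 1)
    have hx1 : 0 ≤ x + 1 := by linarith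
    rw [abs_of_nonneg hx1, abs_of_nonneg hx, max_eq_left (by linarith),
      add_sub_cancel_left, abs_one, one_mul, Nat.add_sub_cancel] at h
    rw [Nat.cast_succ, add_sub_cancel_right, Real.rpow_natCast]
    exact (le_abs_self _).trans (by exact_mod_cast h)

theorem sum_Ico_rpow_sub_one_le {s : ℝ} (hs : s ≤ 1) (hs0 : s ≠ 0) {N M : ℕ} (hN : 1 ≤ N)
    (hNM : N ≤ M) :
    ∑ n ∈ Ico N M, ((n + 1 : ℕ) : ℝ) ^ (s - 1) ≤ ((M : ℝ) ^ s - (N : ℝ) ^ s) / s := by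
  have hN0 : (0 : ℝ) < N := by exact_mod_cast hN
  have hanti : AntitoneOn (fun x : ℝ => x ^ (s - 1)) (Set.Icc N M) := fun x hx y _ hxy =>
    Real.rpow_le_rpow_of_nonpos (hN0.trans_le hx.1) hxy (by linarith)
  have h0 : (0 : ℝ) ∉ Set.uIcc (N : ℝ) M := by
    rw [Set.uIcc_of_le (by exact_mod_cast hNM)]
    exact fun h => h.1.not_gt hN0
  calc _ ≤ ∫ x in (N : ℝ)..M, x ^ (s - 1) := hanti.sum_le_integral_Ico hNM
    _ = _ := by rw [integral_rpow (Or.inr ⟨by simpa using hs0, h0⟩), sub_add_cancel]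

theorem sum_Ico_pow_mul_le {r : ℕ → ℝ} {C e : ℝ} {p : ℕ} (hr : ∀ n, 0 ≤ r n)
    (hsum : Summable r) (hC : 0 ≤ C)
    (htail : ∀ n : ℕ, 1 ≤ n → ∑' j, r (n + j) ≤ C * (n : ℝ) ^ e)
    (hpe : (p : ℝ) + e ≤ 1) (hpe0 : (p : ℝ) + e ≠ 0) {N M : ℕ} (hN : 1 ≤ N) (hNM : N ≤ M) :
    ∑ n ∈ Ico N M, (n : ℝ) ^ p * r n
      ≤ C * (N : ℝ) ^ ((p : ℝ) + e)
        + C * p * (((M : ℝ) ^ ((p : ℝ) + e) - (N : ℝ) ^ ((p : ℝ) + e)) / (p + e)) := by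
  set T : ℕ → ℝ := fun n => ∑' j, r (n + j)
  have habel := sum_Ico_mul_add_mul_eq (a := fun n : ℕ => (n : ℝ) ^ p) (T := T)
    (fun n => by simp only [T, tsum_nat_add_eq_add_tsum hsum n]; ring) hNM
  have hT0 : ∀ n, 0 ≤ T n := fun n => tsum_nonneg fun j => hr _
  have hN0 : (0 : ℝ) < N := by exact_mod_cast hN
  have hfirst : (N : ℝ) ^ p * T N ≤ C * (N : ℝ) ^ ((p : ℝ) + e) := calc
    _ ≤ (N : ℝ) ^ p * (C * (N : ℝ) ^ e) := by gcongr; exact htail N hN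
    _ = _ := by rw [Real.rpow_add hN0, Real.rpow_natCast]; ring
  have hstep : ∀ n : ℕ, (((n + 1 : ℕ) : ℝ) ^ p - (n : ℝ) ^ p) * T (n + 1)
      ≤ C * p * ((n + 1 : ℕ) : ℝ) ^ ((p : ℝ) + e - 1) := fun n => by
    have hn0 : (0 : ℝ) < (n + 1 : ℕ) := by positivity
    have hinc : 0 ≤ ((n + 1 : ℕ) : ℝ) ^ p - (n : ℝ) ^ p := by
      rw [sub_nonneg]; gcongr; exact_mod_cast n.le_succ
    calc _ ≤ (p * ((n + 1 : ℕ) : ℝ) ^ ((p : ℝ) - 1)) * (C * ((n + 1 : ℕ) : ℝ) ^ e) := by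
          refine mul_le_mul ?_ (htail (n + 1) n.succ_pos) (hT0 _) (by positivity)
          push_cast
          exact pow_succ_sub_pow_le n.cast_nonneg p
      _ = C * p * ((n + 1 : ℕ) : ℝ) ^ ((p : ℝ) - 1 + e) := by rw [Real.rpow_add hn0]; ring
      _ = _ := by ring_nf
  have hlast : 0 ≤ (M : ℝ) ^ p * T M := mul_nonneg (by positivity) (hT0 M)
  calc ∑ n ∈ Ico N M, (n : ℝ) ^ p * r n
      ≤ (N : ℝ) ^ p * T N + ∑ n ∈ Ico N M, (((n + 1 : ℕ) : ℝ) ^ p - (n : ℝ) ^ p) * T (n + 1) := by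
        linarith
    _ ≤ C * (N : ℝ) ^ ((p : ℝ) + e)
        + C * p * ∑ n ∈ Ico N M, ((n + 1 : ℕ) : ℝ) ^ ((p : ℝ) + e - 1) := by
        rw [mul_sum]; exact add_le_add hfirst (sum_le_sum fun n _ => hstep n)
    _ ≤ _ := by gcongr; exact sum_Ico_rpow_sub_one_le hpe hpe0 hN hNM

section TailBound

variable {r : ℕ → ℝ} {k : ℕ} {β C : ℝ}

theorem sum_range_pow_mul_nat_add_le (hβ : 0 < β) (hr : ∀ n, 0 ≤ r n) (hsum : Summable r)
    (hC : 0 ≤ C) (htail : ∀ n : ℕ, 1 ≤ n → ∑' j, r (n + j) ≤ C * (n : ℝ) ^ (-(k : ℝ) - β))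
    {N : ℕ} (hN : 1 ≤ N) (m : ℕ) :
    ∑ i ∈ range m, ((i + N : ℕ) : ℝ) ^ k * r (i + N) ≤ C * (1 + k / β) * (N : ℝ) ^ (-β) := by
  have h := sum_Ico_pow_mul_le (p := k) hr hsum hC htail (by linarith)
    (by linarith : (k : ℝ) + (-(k : ℝ) - β) < 0).ne hN (N.le_add_left m)
  rw [show (k : ℝ) + (-(k : ℝ) - β) = -β by ring] at h
  rw [range_eq_Ico, sum_Ico_add' (fun n : ℕ => (n : ℝ) ^ k * r n), zero_add]
  have hM : 0 ≤ ((m + N : ℕ) : ℝ) ^ (-β) := by positivity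
  have hdiff : (((m + N : ℕ) : ℝ) ^ (-β) - (N : ℝ) ^ (-β)) / -β ≤ (N : ℝ) ^ (-β) / β := by
    rw [div_neg, ← neg_div, neg_sub]
    gcongr
    linarith
  calc _ ≤ _ := h
    _ ≤ C * (N : ℝ) ^ (-β) + C * k * ((N : ℝ) ^ (-β) / β) := by gcongr
    _ = _ := by ring

theorem sum_range_pow_succ_mul_le (hβ0 : 0 ≤ β) (hβ1 : β < 1) (hr : ∀ n, 0 ≤ r n)
    (hsum : Summable r) (hC : 0 ≤ C)
    (htail : ∀ n : ℕ, 1 ≤ n → ∑' j, r (n + j) ≤ C * (n : ℝ) ^ (-(k : ℝ) - β)) (M : ℕ) :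
    ∑ n ∈ range M, (n : ℝ) ^ (k + 1) * r n ≤ C * (k + 1) / (1 - β) * (M : ℝ) ^ (1 - β) := by
  have hβ' : 0 < 1 - β := sub_pos.2 hβ1
  rcases Nat.eq_zero_or_pos M with rfl | hM
  · simp [Real.zero_rpow hβ'.ne']
  have h := sum_Ico_pow_mul_le (p := k + 1) hr hsum hC htail (by push_cast; linarith)
    (by push_cast; linarith : ((k + 1 : ℕ) : ℝ) + (-(k : ℝ) - β) > 0).ne' le_rfl hM
  rw [show ((k + 1 : ℕ) : ℝ) + (-(k : ℝ) - β) = 1 - β by push_cast; ring, Nat.cast_one,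
    Real.one_rpow] at h
  have hC' : C ≤ C * (k + 1) / (1 - β) := by
    rw [mul_div_assoc]
    refine le_mul_of_one_le_right hC ((one_le_div hβ').2 ?_)
    linarith [(k.cast_nonneg : (0 : ℝ) ≤ k)]
  rw [range_eq_Ico, sum_eq_sum_Ico_succ_bot hM]
  calc _ = ∑ n ∈ Ico 1 M, (n : ℝ) ^ (k + 1) * r n := by simp
    _ ≤ _ := h
    _ = C * (k + 1) / (1 - β) * (M : ℝ) ^ (1 - β) - (C * (k + 1) / (1 - β) - C) := by
        push_cast; field_simp; ring
    _ ≤ _ := by linarith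

theorem summable_pow_mul (hβ : 0 < β) (hr : ∀ n, 0 ≤ r n) (hsum : Summable r)
    (hC : 0 ≤ C) (htail : ∀ n : ℕ, 1 ≤ n → ∑' j, r (n + j) ≤ C * (n : ℝ) ^ (-(k : ℝ) - β)) :
    Summable fun n : ℕ => (n : ℝ) ^ k * r n :=
  (summable_nat_add_iff 1).mp <|
    summable_of_sum_range_le (fun n => mul_nonneg (by positivity) (hr _))
      (sum_range_pow_mul_nat_add_le hβ hr hsum hC htail le_rfl)

end TailBound

theorem Summable.mul_min_two {ι : Type*} {f g : ι → ℝ} (hf : Summable f) (hf0 : ∀ i, 0 ≤ f i)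
    (hg : ∀ i, 0 ≤ g i) : Summable fun i => f i * min 2 (g i) :=
  (hf.mul_right 2).of_nonneg_of_le (fun i => mul_nonneg (hf0 i) (le_min zero_le_two (hg i)))
    fun i => mul_le_mul_of_nonneg_left (min_le_left _ _) (hf0 i)

section HolderSplit

variable {r : ℕ → ℝ} {k : ℕ} {β C δ : ℝ}

theorem sum_range_pow_mul_min_le (hβ0 : 0 ≤ β) (hβ1 : β < 1) (hr : ∀ n, 0 ≤ r n)
    (hsum : Summable r) (hC : 0 ≤ C)
    (htail : ∀ n : ℕ, 1 ≤ n → ∑' j, r (n + j) ≤ C * (n : ℝ) ^ (-(k : ℝ) - β))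
    (hδ : 0 < δ) {N : ℕ} (hN : (N : ℝ) ≤ 3 * δ⁻¹) :
    ∑ n ∈ range N, (n : ℝ) ^ k * r n * min 2 (n * δ)
      ≤ 3 * (C * (k + 1) / (1 - β)) * δ ^ β := by
  have hC₂ : 0 ≤ C * (k + 1) / (1 - β) := div_nonneg (by positivity) (by linarith)
  calc _ ≤ ∑ n ∈ range N, δ * ((n : ℝ) ^ (k + 1) * r n) := sum_le_sum fun n _ => by
        calc _ ≤ (n : ℝ) ^ k * r n * (n * δ) :=
              mul_le_mul_of_nonneg_left (min_le_right _ _) (mul_nonneg (by positivity) (hr n))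
          _ = _ := by ring
    _ = δ * ∑ n ∈ range N, (n : ℝ) ^ (k + 1) * r n := (mul_sum _ _ _).symm
    _ ≤ δ * (C * (k + 1) / (1 - β) * (3 * δ⁻¹) ^ (1 - β)) := by
        gcongr
        refine (sum_range_pow_succ_mul_le hβ0 hβ1 hr hsum hC htail N).trans ?_
        gcongr
    _ = C * (k + 1) / (1 - β) * 3 ^ (1 - β) * δ ^ β := by
        rw [Real.mul_rpow (by norm_num) (by positivity), Real.inv_rpow hδ.le,
          Real.rpow_sub hδ, Real.rpow_one]
        field_simp
    _ ≤ 3 * (C * (k + 1) / (1 - β)) * δ ^ β := by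
        rw [mul_comm 3]
        gcongr
        calc (3 : ℝ) ^ (1 - β) ≤ 3 ^ (1 : ℝ) :=
              Real.rpow_le_rpow_of_exponent_le (by norm_num) (by linarith)
          _ = 3 := Real.rpow_one 3

theorem tsum_pow_mul_min_nat_add_le (hβ : 0 < β) (hr : ∀ n, 0 ≤ r n)
    (hsum : Summable r) (hC : 0 ≤ C)
    (htail : ∀ n : ℕ, 1 ≤ n → ∑' j, r (n + j) ≤ C * (n : ℝ) ^ (-(k : ℝ) - β))
    (hδ : 0 < δ) {N : ℕ} (hN : δ⁻¹ ≤ N) :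
    ∑' i, ((i + N : ℕ) : ℝ) ^ k * r (i + N) * min 2 ((i + N : ℕ) * δ)
      ≤ 2 * (C * (1 + k / β)) * δ ^ β := by
  have hN1 : 1 ≤ N := Nat.cast_pos.mp ((inv_pos.2 hδ).trans_le hN)
  set f : ℕ → ℝ := fun i => ((i + N : ℕ) : ℝ) ^ k * r (i + N)
  have hf0 : ∀ i, 0 ≤ f i := fun i => mul_nonneg (by positivity) (hr _)
  have hf : Summable f := (summable_nat_add_iff N).mpr (summable_pow_mul hβ hr hsum hC htail)
  calc _ ≤ ∑' i, 2 * f i :=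
        (hf.mul_min_two hf0 fun i => by positivity).tsum_le_tsum
          (fun i => by rw [mul_comm 2]; exact mul_le_mul_of_nonneg_left (min_le_left _ _) (hf0 i))
          (hf.mul_left 2)
    _ = 2 * ∑' i, f i := tsum_mul_left
    _ ≤ 2 * (C * (1 + k / β) * (δ⁻¹) ^ (-β)) := by
        gcongr
        refine (Real.tsum_le_of_sum_range_le hf0
          (sum_range_pow_mul_nat_add_le hβ hr hsum hC htail hN1)).trans ?_
        refine mul_le_mul_of_nonneg_left ?_ (by positivity)
        exact Real.rpow_le_rpow_of_nonpos (inv_pos.2 hδ) hN (neg_nonpos.2 hβ.le)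
    _ = _ := by rw [Real.inv_rpow hδ.le, Real.rpow_neg hδ.le, inv_inv]; ring

theorem tsum_pow_mul_min_le (hβ0 : 0 < β) (hβ1 : β < 1) (hr : ∀ n, 0 ≤ r n)
    (hsum : Summable r) (hC : 0 ≤ C)
    (htail : ∀ n : ℕ, 1 ≤ n → ∑' j, r (n + j) ≤ C * (n : ℝ) ^ (-(k : ℝ) - β))
    (hδ : 0 < δ) (hδ2 : δ ≤ 2) :
    ∑' n : ℕ, (n : ℝ) ^ k * r n * min 2 (n * δ)
      ≤ (3 * (C * (k + 1) / (1 - β)) + 2 * (C * (1 + k / β))) * δ ^ β := by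
  have hF : Summable fun n : ℕ => (n : ℝ) ^ k * r n * min 2 (n * δ) :=
    (summable_pow_mul hβ0 hr hsum hC htail).mul_min_two
      (fun n => mul_nonneg (by positivity) (hr n)) fun n => by positivity
  set N := ⌈δ⁻¹⌉₊
  have hNle : (N : ℝ) ≤ 3 * δ⁻¹ := by
    have h1 := Nat.ceil_lt_add_one (inv_nonneg.2 hδ.le)
    have h2 : 1 ≤ 2 * δ⁻¹ := by rw [← div_eq_mul_inv, le_div_iff₀ hδ]; linarith
    linarith
  rw [← hF.sum_add_tsum_nat_add N, add_mul]
  exact add_le_add (sum_range_pow_mul_min_le hβ0.le hβ1 hr hsum hC htail hδ hNle)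
    (tsum_pow_mul_min_nat_add_le hβ0 hr hsum hC htail hδ (Nat.le_ceil _))

end HolderSplit

section PowerSeries

variable {𝕜 : Type*} [NormedField 𝕜] {z w : 𝕜}

theorem norm_pow_sub_pow_le_min (hz : ‖z‖ ≤ 1) (hw : ‖w‖ ≤ 1) (n : ℕ) :
    ‖z ^ n - w ^ n‖ ≤ min 2 (n * ‖z - w‖) := by
  refine le_min ?_ ?_
  · calc ‖z ^ n - w ^ n‖ ≤ ‖z‖ ^ n + ‖w‖ ^ n := by
          rw [← norm_pow, ← norm_pow]; exact norm_sub_le _ _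
      _ ≤ 1 + 1 := by gcongr <;> exact pow_le_one₀ (norm_nonneg _) ‹_›
      _ = 2 := one_add_one_eq_two
  · induction n with
    | zero => simp
    | succ n ih =>
      calc ‖z ^ (n + 1) - w ^ (n + 1)‖ = ‖z * (z ^ n - w ^ n) + (z - w) * w ^ n‖ := by ring_nf
        _ ≤ ‖z‖ * ‖z ^ n - w ^ n‖ + ‖z - w‖ * ‖w‖ ^ n := by
          rw [← norm_mul, ← norm_pow, ← norm_mul]; exact norm_add_le _ _
        _ ≤ 1 * (n * ‖z - w‖) + ‖z - w‖ * 1 := by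
          gcongr
          exact pow_le_one₀ (norm_nonneg _) hw
        _ = _ := by push_cast; ring

theorem norm_tsum_mul_pow_sub_tsum_mul_pow_le [CompleteSpace 𝕜] {c : ℕ → 𝕜} {b : ℕ → ℝ}
    (hb : Summable b) (hc : ∀ i, ‖c i‖ ≤ b i) (hz : ‖z‖ ≤ 1) (hw : ‖w‖ ≤ 1) :
    ‖∑' i, c i * z ^ i - ∑' i, c i * w ^ i‖ ≤ ∑' i, b i * min 2 (i * ‖z - w‖) := by
  have hb0 : ∀ i, 0 ≤ b i := fun i => (norm_nonneg _).trans (hc i)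
  have hsummable : ∀ {x : 𝕜}, ‖x‖ ≤ 1 → Summable fun i => c i * x ^ i := fun hx =>
    hb.of_norm_bounded fun i => by
      rw [norm_mul, norm_pow]
      exact (mul_le_of_le_one_right (norm_nonneg _) (pow_le_one₀ (norm_nonneg _) hx)).trans
        (hc i)
  rw [← (hsummable hz).tsum_sub (hsummable hw)]
  refine tsum_of_norm_bounded (hb.mul_min_two hb0 fun i => by positivity).hasSum fun i => ?_
  rw [← mul_sub, norm_mul]
  exact mul_le_mul (hc i) (norm_pow_sub_pow_le_min hz hw i) (norm_nonneg _) (hb0 i)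

end PowerSeries

theorem norm_prod_range_sub_mul_le (i k : ℕ) {x : ℝ} (hx : 0 ≤ x) :
    ‖((∏ m ∈ range k, ((i + k - m : ℕ) : ℝ)) : ℂ) * (x : ℂ)‖ ≤ ((i + k : ℕ) : ℝ) ^ k * x := by
  rw [norm_mul, Complex.norm_real, Real.norm_of_nonneg hx]
  simp only [Complex.ofReal_natCast]
  rw [← Nat.cast_prod, ← Nat.descFactorial_eq_prod_range, Complex.norm_natCast]
  exact mul_le_mul_of_nonneg_right (by exact_mod_cast Nat.descFactorial_le_pow _ _) hx

theorem tsum_nat_add_mul_min_le {f : ℕ → ℝ} (hf : Summable f) (hf0 : ∀ n, 0 ≤ f n) (k : ℕ)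
    {δ : ℝ} (hδ : 0 ≤ δ) :
    ∑' i, f (i + k) * min 2 (i * δ) ≤ ∑' n, f n * min 2 (n * δ) := by
  refine Summable.tsum_le_tsum_of_inj (· + k) (add_left_injective k)
    (fun n _ => mul_nonneg (hf0 n) (le_min zero_le_two (by positivity))) (fun i => ?_)
    (((summable_nat_add_iff k).mpr hf).mul_min_two (fun i => hf0 _) fun i => by positivity)
    (hf.mul_min_two hf0 fun n => by positivity)
  gcongr
  · exact hf0 _
  · exact_mod_cast i.le_add_right k

theorem kth_derivative_series_holder_general
    (k : ℕ) (β : ℝ) (hβ : 0 < β ∧ β < 1) (C : ℝ) (hC : 0 < C) :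
    ∃ C' > 0, ∀ r : ℕ → ℝ, (∀ n, 0 ≤ r n) → Summable r →
      (∀ n : ℕ, 1 ≤ n → (∑' j : ℕ, r (n + j)) ≤ C * (n : ℝ) ^ (-(k : ℝ) - β)) →
      ∀ z₁ ∈ Metric.closedBall (0 : ℂ) 1, ∀ z₂ ∈ Metric.closedBall (0 : ℂ) 1,
        ‖(∑' i : ℕ, ((∏ m ∈ Finset.range k, ((i + k - m : ℕ) : ℝ)) : ℂ)
              * (r (i + k) : ℂ) * z₁ ^ i)
          - (∑' i : ℕ, ((∏ m ∈ Finset.range k, ((i + k - m : ℕ) : ℝ)) : ℂ)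
              * (r (i + k) : ℂ) * z₂ ^ i)‖
          ≤ C' * ‖z₁ - z₂‖ ^ β := by
  obtain ⟨hβ0, hβ1⟩ := hβ
  refine ⟨3 * (C * (k + 1) / (1 - β)) + 2 * (C * (1 + k / β)), by positivity, ?_⟩
  intro r hr hsum htail z₁ hz₁ z₂ hz₂
  rw [mem_closedBall_zero_iff] at hz₁ hz₂
  rcases eq_or_ne z₁ z₂ with rfl | hne
  · simp [Real.zero_rpow hβ0.ne']
  have hf := summable_pow_mul hβ0 hr hsum hC.le htail
  have hf0 : ∀ n : ℕ, 0 ≤ (n : ℝ) ^ k * r n := fun n => mul_nonneg (by positivity) (hr n)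
  have hδ : 0 < ‖z₁ - z₂‖ := norm_pos_iff.2 (sub_ne_zero.2 hne)
  have hδ2 : ‖z₁ - z₂‖ ≤ 2 := (norm_sub_le _ _).trans (by linarith)
  calc _ ≤ ∑' i, ((i + k : ℕ) : ℝ) ^ k * r (i + k) * min 2 (i * ‖z₁ - z₂‖) :=
        norm_tsum_mul_pow_sub_tsum_mul_pow_le ((summable_nat_add_iff k).mpr hf)
          (fun i => norm_prod_range_sub_mul_le i k (hr _)) hz₁ hz₂
    _ ≤ ∑' n : ℕ, (n : ℝ) ^ k * r n * min 2 (n * ‖z₁ - z₂‖) :=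
        tsum_nat_add_mul_min_le hf hf0 k hδ.le
    _ ≤ _ := tsum_pow_mul_min_le hβ0 hβ1 hr hsum hC.le htail hδ hδ2

/-- If the tails satisfy `Σ_{j≥n} r_j ≤ C n^{-k-β}` with `β ∈ (0,1)`, then
`g(z) = Σ_i P_{i+k}^k r_{i+k} z^i` is `β`-Hölder on the closed unit disk, with a
Hölder constant depending only on `C`, `k`, `β`. -/
theorem kth_derivative_series_holder
    (k : ℕ) (hk : 1 ≤ k) (β : ℝ) (hβ : 0 < β ∧ β < 1) (C : ℝ) (hC : 0 < C) :
    ∃ C' > 0, ∀ r : ℕ → ℝ, (∀ n, 0 ≤ r n) → Summable r →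
      (∀ n : ℕ, 1 ≤ n → (∑' j : ℕ, r (n + j)) ≤ C * (n : ℝ) ^ (-(k : ℝ) - β)) →
      ∀ z₁ ∈ Metric.closedBall (0 : ℂ) 1, ∀ z₂ ∈ Metric.closedBall (0 : ℂ) 1,
        ‖(∑' i : ℕ, ((∏ m ∈ Finset.range k, ((i + k - m : ℕ) : ℝ)) : ℂ)
              * (r (i + k) : ℂ) * z₁ ^ i)
          - (∑' i : ℕ, ((∏ m ∈ Finset.range k, ((i + k - m : ℕ) : ℝ)) : ℂ)
              * (r (i + k) : ℂ) * z₂ ^ i)‖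
          ≤ C' * ‖z₁ - z₂‖ ^ β :=
  kth_derivative_series_holder_general k β hβ C hC
end

section
/- Let B be a Banach space with a second norm |·| satisfying |φ| ≤ C‖φ‖, and let {P_v} be bounded operators satisfying uniformly ‖P_v^n φ‖ ≤ C θ^n ‖φ‖ + C M^n |φ| and |P_v^n φ| ≤ C M^n |φ| for all n, with 0 < θ < M. Fix r ∈ (θ, M) and z ∈ ℂ with r < |z| ≤ 4CM. If (z - P_v) g = h, then there are constants C', n₀ depending only on C, θ, r, M (not on v, z, g, h) such that ‖g‖ ≤ C' ‖h‖ + C' |g|. -/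
/-!
Iterating `(z - P) g = h` gives `z ^ n g = P ^ n g + ∑_{i < n} z ^ i P ^ (n - 1 - i) h`. The
Lasota–Yorke inequality bounds the strong norm of `P ^ n g` by `C θ ^ n ‖g‖ + C M ^ n |g|`, and each
power of `P` is bounded on `B` with a constant depending only on `C`, `θ`, `M`. Since `|z| > r > θ`,
for `n` with `2 C θ ^ n ≤ r ^ n` the term `C θ ^ n ‖g‖` is absorbed by half of
`‖z ^ n g‖ ≥ r ^ n ‖g‖`.
-/

open Finset

noncomputable def lasotaYorkeSumBound (C θ M R : ℝ) (n : ℕ) : ℝ :=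
  ∑ i ∈ range n, R ^ i * (C * (θ ^ (n - 1 - i) + C * M ^ (n - 1 - i)))

theorem lasotaYorkeSumBound_nonneg {C θ M R : ℝ} (hC : 0 ≤ C) (hθ : 0 ≤ θ) (hM : 0 ≤ M)
    (hR : 0 ≤ R) (n : ℕ) : 0 ≤ lasotaYorkeSumBound C θ M R n := by
  unfold lasotaYorkeSumBound
  positivity

section LasotaYorke

variable {𝕜 : Type*} [NontriviallyNormedField 𝕜] {E : Type*} [NormedAddCommGroup E]
  [NormedSpace 𝕜 E]

theorem ContinuousLinearMap.smul_pow_apply_sub_pow_apply (T : E →L[𝕜] E) (z : 𝕜) (n : ℕ)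
    (g : E) :
    z ^ n • g - (T ^ n) g = ∑ i ∈ range n, z ^ i • (T ^ (n - 1 - i)) ((z • 1 - T) g) := by
  have hgeom := ((Commute.one_left T).smul_left z).geom_sum₂_mul n
  have := congrArg (fun S : E →L[𝕜] E => S g) hgeom
  simpa [smul_pow] using this.symm

variable {T : E →L[𝕜] E} {w : E → ℝ} {C θ M : ℝ}

theorem norm_pow_apply_le_of_lasotaYorke (hC : 0 ≤ C) (hM : 0 ≤ M)
    (hw : ∀ φ, w φ ≤ C * ‖φ‖) (hLY : ∀ n φ, ‖(T ^ n) φ‖ ≤ C * θ ^ n * ‖φ‖ + C * M ^ n * w φ)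
    (k : ℕ) (φ : E) : ‖(T ^ k) φ‖ ≤ C * (θ ^ k + C * M ^ k) * ‖φ‖ :=
  calc ‖(T ^ k) φ‖ ≤ C * θ ^ k * ‖φ‖ + C * M ^ k * w φ := hLY k φ
    _ ≤ C * θ ^ k * ‖φ‖ + C * M ^ k * (C * ‖φ‖) := by gcongr; exact hw φ
    _ = C * (θ ^ k + C * M ^ k) * ‖φ‖ := by ring

theorem norm_smul_pow_apply_sub_pow_apply_le (hC : 0 ≤ C) (hM : 0 ≤ M)
    (hw : ∀ φ, w φ ≤ C * ‖φ‖) (hLY : ∀ n φ, ‖(T ^ n) φ‖ ≤ C * θ ^ n * ‖φ‖ + C * M ^ n * w φ)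
    {z : 𝕜} {R : ℝ} (hzR : ‖z‖ ≤ R) (n : ℕ) (g : E) :
    ‖z ^ n • g - (T ^ n) g‖ ≤ lasotaYorkeSumBound C θ M R n * ‖(z • 1 - T) g‖ := by
  rw [T.smul_pow_apply_sub_pow_apply, lasotaYorkeSumBound, sum_mul]
  refine (norm_sum_le _ _).trans (sum_le_sum fun i _ => ?_)
  rw [norm_smul, norm_pow, mul_assoc]
  exact mul_le_mul (pow_le_pow_left₀ (norm_nonneg z) hzR i)
    (norm_pow_apply_le_of_lasotaYorke hC hM hw hLY _ _) (norm_nonneg _)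
    (pow_nonneg ((norm_nonneg z).trans hzR) i)

theorem half_pow_mul_norm_le_of_lasotaYorke (hC : 0 ≤ C) (hM : 0 ≤ M)
    (hw : ∀ φ, w φ ≤ C * ‖φ‖) (hLY : ∀ n φ, ‖(T ^ n) φ‖ ≤ C * θ ^ n * ‖φ‖ + C * M ^ n * w φ)
    {r : ℝ} {n : ℕ} (hr : 0 ≤ r) (hn : 2 * (C * θ ^ n) ≤ r ^ n) {z : 𝕜} {R : ℝ} (hrz : r ≤ ‖z‖)
    (hzR : ‖z‖ ≤ R) (g : E) :
    r ^ n / 2 * ‖g‖ ≤ lasotaYorkeSumBound C θ M R n * ‖(z • 1 - T) g‖ + C * M ^ n * w g := by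
  have hzn : r ^ n * ‖g‖ ≤ ‖z ^ n • g‖ := by
    rw [norm_smul, norm_pow]
    gcongr
  have hsplit : ‖z ^ n • g‖ ≤ ‖z ^ n • g - (T ^ n) g‖ + ‖(T ^ n) g‖ := norm_le_norm_sub_add _ _
  have hθg : C * θ ^ n * ‖g‖ ≤ r ^ n / 2 * ‖g‖ := by gcongr; linarith
  linarith [norm_smul_pow_apply_sub_pow_apply_le hC hM hw hLY hzR n g, hLY n g]

end LasotaYorke

theorem exists_two_mul_mul_pow_le_pow {C θ r : ℝ} (hC : 0 < C) (hθ : 0 ≤ θ) (hθr : θ < r) :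
    ∃ n : ℕ, 2 * (C * θ ^ n) ≤ r ^ n := by
  have hr : 0 < r := hθ.trans_lt hθr
  obtain ⟨n, hn⟩ := exists_pow_lt_of_lt_one (show 0 < 1 / (2 * C) by positivity)
    ((div_lt_one hr).2 hθr)
  refine ⟨n, ?_⟩
  rw [div_pow, div_lt_div_iff₀ (by positivity) (by positivity)] at hn
  linarith

theorem keller_liverani_apriori_estimate_general
    {B : Type*} [NormedAddCommGroup B] [NormedSpace ℂ B] {ι : Type*}
    (P : ι → (B →L[ℂ] B)) (wnorm : B → ℝ) (C θ M r : ℝ)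
    (hC : 0 < C) (hθ : 0 < θ) (hr : θ < r ∧ r < M)
    (hw0 : ∀ φ : B, 0 ≤ wnorm φ) (hw : ∀ φ : B, wnorm φ ≤ C * ‖φ‖)
    (hLY : ∀ v : ι, ∀ n : ℕ, ∀ φ : B,
      ‖(P v ^ n) φ‖ ≤ C * θ ^ n * ‖φ‖ + C * M ^ n * wnorm φ) :
    ∃ C' > 0, ∀ v : ι, ∀ z : ℂ, r < ‖z‖ → ‖z‖ ≤ 4 * C * M → ∀ g h : B,
      (z • (1 : B →L[ℂ] B) - P v) g = h → ‖g‖ ≤ C' * ‖h‖ + C' * wnorm g := by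
  obtain ⟨hθr, hrM⟩ := hr
  have hr0 : 0 < r := hθ.trans hθr
  have hM : 0 < M := hr0.trans hrM
  obtain ⟨n, hn⟩ := exists_two_mul_mul_pow_le_pow hC hθ.le hθr
  set K := lasotaYorkeSumBound C θ M (4 * C * M) n
  have hK : 0 ≤ K := lasotaYorkeSumBound_nonneg hC.le hθ.le hM.le (by positivity) n
  refine ⟨2 * (K + C * M ^ n) / r ^ n, by positivity, ?_⟩
  rintro v z hrz hzR g h rfl
  have key := half_pow_mul_norm_le_of_lasotaYorke hC.le hM.le hw (hLY v) hr0.le hn hrz.le hzR g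
  have hCM : 0 ≤ C * M ^ n := by positivity
  rw [div_mul_eq_mul_div, div_mul_eq_mul_div, ← add_div, le_div_iff₀ (by positivity)]
  linarith [mul_nonneg hCM (norm_nonneg ((z • (1 : B →L[ℂ] B) - P v) g)), mul_nonneg hK (hw0 g)]

/-- A priori two-norm estimate in the generalized Keller–Liverani argument:
under uniform Lasota–Yorke inequalities and weak-norm boundedness, if
`(z - P_v) g = h` with `r < |z| ≤ 4CM`, then `‖g‖ ≤ C'‖h‖ + C'|g|` with `C'`
independent of `v`, `z`, `g`, `h`. -/
theorem keller_liverani_apriori_estimate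
    {B : Type*} [NormedAddCommGroup B] [NormedSpace ℂ B] {ι : Type*}
    (P : ι → (B →L[ℂ] B)) (wnorm : B → ℝ) (C θ M r : ℝ)
    (hC : 0 < C) (hθ : 0 < θ) (hθM : θ < M) (hr : θ < r ∧ r < M)
    (hw0 : ∀ φ : B, 0 ≤ wnorm φ) (hw : ∀ φ : B, wnorm φ ≤ C * ‖φ‖)
    (hweak : ∀ v : ι, ∀ n : ℕ, ∀ φ : B, wnorm ((P v ^ n) φ) ≤ C * M ^ n * wnorm φ)
    (hLY : ∀ v : ι, ∀ n : ℕ, ∀ φ : B,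
      ‖(P v ^ n) φ‖ ≤ C * θ ^ n * ‖φ‖ + C * M ^ n * wnorm φ) :
    ∃ C' > 0, ∀ v : ι, ∀ z : ℂ, r < ‖z‖ → ‖z‖ ≤ 4 * C * M → ∀ g h : B,
      (z • (1 : B →L[ℂ] B) - P v) g = h → ‖g‖ ≤ C' * ‖h‖ + C' * wnorm g :=
  keller_liverani_apriori_estimate_general P wnorm C θ M r hC hθ hr hw0 hw hLY
end
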